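/- Let M be a continuous real-valued L^q-martingale on [0,T] for some q ≥ 2, and let D = {t_k}_{k=0}^n be a finite partition of [0,T]. Then E(|Σ_{k=0}^{n−1} (M_{t_{k+1}} − M_{t_k})² − ⟨M⟩_T|^{q/2}) ≤ C_q (E(‖M‖_{4-var,[0,T]}^q) + E(‖⟨M⟩‖_{1-var,[0,T]}^{q/2})) for a constant C_q depending only on q. -/

import Mathlib

open scoped BigOperators ENNReal
open MeasureTheory Filter Set

noncomputable section

/-- A finite partition of the interval `[a,b]`. -/
structure RPPartition (a b : ℝ) where
  n : ℕ
  t : ℕ → ℝ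
  mono : Monotone t
  first : t 0 = a
  last : ∀ k, n ≤ k → t k = b

/-- The mesh of the partition is at most `δ`. -/
def RPPartition.MeshLe {a b : ℝ} (D : RPPartition a b) (δ : ℝ) : Prop :=
  ∀ k < D.n, D.t (k + 1) - D.t k ≤ δ

/-- `pVar p f a b` is the `p`-variation of `f` on `[a,b]`, raised to the power `p`:
the supremum over finite partitions of the sums `∑ ‖f (t_{k+1}) - f (t_k)‖ ^ p`. -/
def pVar {E : Type*} [NormedAddCommGroup E] (p : ℝ) (f : ℝ → E) (a b : ℝ) : ℝ≥0∞ :=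
  ⨆ D : RPPartition a b,
    ENNReal.ofReal (∑ k ∈ Finset.range D.n, ‖f (D.t (k + 1)) - f (D.t k)‖ ^ p)

abbrev Vec (d : ℕ) := Fin d → ℝ
abbrev Ten (d : ℕ) := Fin d → Fin d → ℝ

/-- Tensor product of two vectors. -/
def tpr2 {d : ℕ} (a b : Vec d) : Ten d := fun i j => a i * b j

/-- Product in the level-2 truncated tensor group (scalar component 1 suppressed). -/
def g2mul {d : ℕ} (g h : Vec d × Ten d) : Vec d × Ten d :=
  (g.1 + h.1, g.2 + h.2 + tpr2 g.1 h.1)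

def g2one (d : ℕ) : Vec d × Ten d := (0, 0)

def g2inv {d : ℕ} (g : Vec d × Ten d) : Vec d × Ten d :=
  (-g.1, -g.2 + tpr2 g.1 g.1)

/-- Group increment `g⁻¹ ⊗ h`. -/
def g2inc {d : ℕ} (g h : Vec d × Ten d) : Vec d × Ten d := g2mul (g2inv g) h

/-- Homogeneous norm `‖g‖ = |π₁ g| + |π₂ g|^{1/2}`. -/
def homNorm {d : ℕ} (g : Vec d × Ten d) : ℝ := ‖g.1‖ + Real.sqrt ‖g.2‖

/-- `p`-variation (to the power `p`) of a tensor-group valued path, w.r.t. group increments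
and the homogeneous norm. -/
def pVarG {d : ℕ} (p : ℝ) (γ : ℝ → Vec d × Ten d) (a b : ℝ) : ℝ≥0∞ :=
  ⨆ D : RPPartition a b,
    ENNReal.ofReal
      (∑ k ∈ Finset.range D.n, homNorm (g2inc (γ (D.t k)) (γ (D.t (k + 1)))) ^ p)

/-- Symmetric part of a 2-tensor. -/
def symT {d : ℕ} (A : Ten d) : Ten d := fun i j => (A i j + A j i) / 2

/-- Antisymmetric part of a 2-tensor. -/
def antiT {d : ℕ} (A : Ten d) : Ten d := fun i j => (A i j - A j i) / 2

/-- `I` is the Riemann–Stieltjes integral `∫_a^b f dg`, as the limit of left Riemann sums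
along partitions of mesh tending to `0`. -/
def IsRSIntegralOn (f g : ℝ → ℝ) (a b : ℝ) (I : ℝ) : Prop :=
  ∀ ε > (0:ℝ), ∃ δ > (0:ℝ), ∀ D : RPPartition a b, D.MeshLe δ →
    |(∑ k ∈ Finset.range D.n, f (D.t k) * (g (D.t (k + 1)) - g (D.t k))) - I| ≤ ε

/-- The truncated tensor algebra `T^{(m)}(ℝᵈ)`, level `k` encoded as functions on
multi-indices of length `k`. -/
def TA (d m : ℕ) := ∀ k : Fin (m + 1), (Fin k.1 → Fin d) → ℝ

/-- Truncated tensor product on `TA d m`. -/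
def taMul {d m : ℕ} (x y : TA d m) : TA d m := fun k idx =>
  ∑ j : Fin (k.1 + 1),
    x ⟨j.1, by have h1 := j.2; have h2 := k.2; omega⟩
        (fun i => idx ⟨i.1, by have h1 : i.1 < j.1 := i.2; have h2 := j.2; omega⟩) *
    y ⟨k.1 - j.1, by have h2 := k.2; omega⟩
        (fun i => idx ⟨j.1 + i.1, by
          have h1 : i.1 < k.1 - j.1 := i.2; have h2 := j.2; omega⟩)

/-- Left Riemann–Stieltjes sum of random paths. -/
def RSumLeft {Ω : Type*} (f g : ℝ → Ω → ℝ) {a b : ℝ} (D : RPPartition a b) (ω : Ω) : ℝ :=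
  ∑ k ∈ Finset.range D.n, f (D.t k) ω * (g (D.t (k + 1)) ω - g (D.t k) ω)

/-- Trapezoidal (Stratonovich-type) Riemann sum. -/
def RSumTrap {Ω : Type*} (f g : ℝ → Ω → ℝ) {a b : ℝ} (D : RPPartition a b) (ω : Ω) : ℝ :=
  ∑ k ∈ Finset.range D.n,
    (f (D.t k) ω + f (D.t (k + 1)) ω) / 2 * (g (D.t (k + 1)) ω - g (D.t k) ω)

/-- Sum of products of increments (quadratic covariation sums). -/
def RSumQuad {Ω : Type*} (f g : ℝ → Ω → ℝ) {a b : ℝ} (D : RPPartition a b) (ω : Ω) : ℝ :=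
  ∑ k ∈ Finset.range D.n,
    (f (D.t (k + 1)) ω - f (D.t k) ω) * (g (D.t (k + 1)) ω - g (D.t k) ω)

/-- Convergence in probability of partition sums as the mesh tends to `0`. -/
def TendstoInProbOnPartitions {Ω : Type*} [MeasurableSpace Ω] (μ : Measure Ω) (a b : ℝ)
    (Sf : RPPartition a b → Ω → ℝ) (L : Ω → ℝ) : Prop :=
  ∀ ε > (0:ℝ), ∀ η > (0:ℝ), ∃ δ > (0:ℝ), ∀ D : RPPartition a b, D.MeshLe δ →
    μ {ω | ε ≤ |Sf D ω - L ω|} ≤ ENNReal.ofReal η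

end

/-!
Let `p = q / 2`, let `G_k = ∑_{j<k} (M_{t_{j+1}} - M_{t_j})²` be the partial quadratic sums along
the partition and `δ = (∑_j (M_{t_{j+1}} - M_{t_j})⁴)^{1/2}`, which dominates every increment of
`G`. Convexity of `x ↦ x ^ p` gives the pathwise Garsia-type bound
`G_n^p ≤ p ∑_k G_k^{p-1} (G_{k+1} - G_k) + p δ G_n^{p-1}`.
Since `M` and `M² - A` are martingales, `(M_{t_{k+1}} - M_{t_k})² - (A_{t_{k+1}} - A_{t_k})` has
conditional mean zero given `F_{t_k}`, so in expectation the increments of `G` may be replaced by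
those of the nondecreasing process `A`, whence `E G_n^p ≤ p E[G_n^{p-1} (A_T + δ)]`.
Absorbing half of `E G_n^p` back into the left-hand side leaves
`E G_n^p ≤ (2p)^p E (A_T + δ)^p`. Finally `A_T` is bounded by the 1-variation of `A` and `δ^p`
by the `q`-th power of the 4-variation of `M`.
-/

open Finset

namespace Real

variable {p x y : ℝ}

lemma rpow_sub_rpow_le_mul_rpow_sub_one_mul (hp : 1 ≤ p) (hx : 0 ≤ x) (hxy : x ≤ y) :
    y ^ p - x ^ p ≤ p * y ^ (p - 1) * (y - x) := by
  rcases hxy.eq_or_lt' with rfl | hy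
  · simp
  have hy : 0 < y := hx.trans_lt hy
  have bernoulli := one_add_mul_self_le_rpow_one_add (s := x / y - 1) (by
    have := div_nonneg hx hy.le; linarith) hp
  rw [add_sub_cancel, div_rpow hx hy.le, le_div_iff₀ (rpow_pos_of_pos hy p)] at bernoulli
  have hyp : y ^ p = y ^ (p - 1) * y := by
    rw [← rpow_add_one hy.ne', sub_add_cancel]
  have : y ^ p * (x / y - 1) = y ^ (p - 1) * (x - y) := by
    rw [hyp]; field_simp
  nlinarith

lemma max_rpow_le_rpow_add_rpow (hx : 0 ≤ x) (hy : 0 ≤ y) :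
    max x y ^ p ≤ x ^ p + y ^ p := by
  rcases le_total x y with h | h
  · simpa [max_eq_right h] using rpow_nonneg hx p
  · simpa [max_eq_left h] using rpow_nonneg hy p

lemma mul_rpow_sub_one_le_rpow_add_rpow (hx : 0 ≤ x) (hy : 0 ≤ y) (hp : 1 ≤ p) :
    x * y ^ (p - 1) ≤ x ^ p + y ^ p := by
  have hm : 0 ≤ max x y := hx.trans (le_max_left x y)
  calc x * y ^ (p - 1) ≤ max x y * max x y ^ (p - 1) :=
        mul_le_mul (le_max_left x y) (rpow_le_rpow hy (le_max_right x y) (by linarith))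
          (rpow_nonneg hy _) hm
    _ = max x y ^ p := by rw [← rpow_one_add' hm (by linarith), add_sub_cancel]
    _ ≤ x ^ p + y ^ p := max_rpow_le_rpow_add_rpow hx hy

lemma abs_sub_rpow_le_rpow_add_rpow (hx : 0 ≤ x) (hy : 0 ≤ y) (hp : 0 ≤ p) :
    |x - y| ^ p ≤ x ^ p + y ^ p := by
  have : |x - y| ≤ max x y := by
    rw [abs_sub_le_iff]; constructor <;> linarith [le_max_left x y, le_max_right x y]
  exact (rpow_le_rpow (abs_nonneg _) this hp).trans (max_rpow_le_rpow_add_rpow hx hy)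

lemma add_rpow_le_two_rpow_mul (hx : 0 ≤ x) (hy : 0 ≤ y) (hp : 0 ≤ p) :
    (x + y) ^ p ≤ 2 ^ p * (x ^ p + y ^ p) := by
  calc (x + y) ^ p ≤ (2 * max x y) ^ p := by
        gcongr; linarith [le_max_left x y, le_max_right x y]
    _ = 2 ^ p * max x y ^ p := mul_rpow zero_le_two (hx.trans (le_max_left x y))
    _ ≤ 2 ^ p * (x ^ p + y ^ p) := by gcongr; exact max_rpow_le_rpow_add_rpow hx hy

end Real

lemma rpow_le_sum_rpow_sub_one_mul_sub_add {p δ : ℝ} {g : ℕ → ℝ} {n : ℕ} (hp : 1 ≤ p)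
    (hg0 : g 0 = 0) (hg : Monotone g) (hδ : 0 ≤ δ) (hinc : ∀ k < n, g (k + 1) - g k ≤ δ) :
    g n ^ p ≤ p * ∑ k ∈ range n, g k ^ (p - 1) * (g (k + 1) - g k) + p * δ * g n ^ (p - 1) := by
  have hg_nonneg : ∀ k, 0 ≤ g k := fun k => hg0 ▸ hg k.zero_le
  have step : ∀ k < n, g (k + 1) ^ p - g k ^ p ≤
      p * (g k ^ (p - 1) * (g (k + 1) - g k)) + p * δ * (g (k + 1) ^ (p - 1) - g k ^ (p - 1)) := by
    intro k hk
    have hmono : g k ≤ g (k + 1) := hg k.le_succ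
    have tangent := Real.rpow_sub_rpow_le_mul_rpow_sub_one_mul hp (hg_nonneg k) hmono
    have hpow : g k ^ (p - 1) ≤ g (k + 1) ^ (p - 1) :=
      Real.rpow_le_rpow (hg_nonneg k) hmono (by linarith)
    have := mul_le_mul_of_nonneg_left
      (mul_le_mul_of_nonneg_right (hinc k hk) (sub_nonneg.2 hpow)) (by linarith : 0 ≤ p)
    linarith
  calc g n ^ p = ∑ k ∈ range n, (g (k + 1) ^ p - g k ^ p) := by
        rw [sum_range_sub (fun k => g k ^ p), hg0, Real.zero_rpow (by linarith), sub_zero]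
    _ ≤ ∑ k ∈ range n, (p * (g k ^ (p - 1) * (g (k + 1) - g k)) +
          p * δ * (g (k + 1) ^ (p - 1) - g k ^ (p - 1))) :=
        sum_le_sum fun k hk => step k (mem_range.1 hk)
    _ = p * ∑ k ∈ range n, g k ^ (p - 1) * (g (k + 1) - g k) +
          p * δ * (g n ^ (p - 1) - g 0 ^ (p - 1)) := by
        rw [sum_add_distrib, ← mul_sum, ← mul_sum, sum_range_sub (fun k => g k ^ (p - 1))]
    _ ≤ _ := by
        have : 0 ≤ p * δ * g 0 ^ (p - 1) :=
          mul_nonneg (by positivity) (Real.rpow_nonneg (hg_nonneg 0) _)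
        linarith

namespace MeasureTheory

variable {Ω : Type*} {m0 : MeasurableSpace Ω} {μ : Measure Ω}

section Integrability

variable {p : ℝ} {f g : Ω → ℝ}

lemma MemLp.integrable_abs_rpow (hp : 0 < p) (hf : MemLp f (ENNReal.ofReal p) μ) :
    Integrable (fun ω => |f ω| ^ p) μ := by
  simpa [ENNReal.toReal_ofReal hp.le] using
    hf.integrable_norm_rpow (by simpa using hp) ENNReal.ofReal_ne_top

lemma MemLp.integrable_rpow (hp : 0 < p) (hf : MemLp f (ENNReal.ofReal p) μ) (hf0 : 0 ≤ f) :
    Integrable (fun ω => f ω ^ p) μ := by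
  simpa [abs_of_nonneg (hf0 _)] using hf.integrable_abs_rpow hp

lemma MemLp.integrable_rpow_sub_one_mul (hp : 1 ≤ p) (hg : MemLp g (ENNReal.ofReal p) μ)
    (hg0 : 0 ≤ g) (hf : MemLp f (ENNReal.ofReal p) μ) :
    Integrable (fun ω => g ω ^ (p - 1) * f ω) μ := by
  refine ((hf.integrable_abs_rpow (by linarith)).add
    (hg.integrable_rpow (by linarith) hg0)).mono' ?_ (Eventually.of_forall fun ω => ?_)
  · exact ((Real.continuous_rpow_const (by linarith)).comp_aestronglyMeasurable hg.1).mul hf.1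
  · rw [norm_mul, Real.norm_of_nonneg (Real.rpow_nonneg (hg0 ω) _), Real.norm_eq_abs, mul_comm]
    exact Real.mul_rpow_sub_one_le_rpow_add_rpow (abs_nonneg _) (hg0 ω) hp

lemma MemLp.mul_of_two_mul (hp : 0 < p) (hf : MemLp f (ENNReal.ofReal (2 * p)) μ)
    (hg : MemLp g (ENNReal.ofReal (2 * p)) μ) :
    MemLp (fun ω => f ω * g ω) (ENNReal.ofReal p) μ := by
  have : ENNReal.HolderTriple (ENNReal.ofReal (2 * p)) (ENNReal.ofReal (2 * p))
      (ENNReal.ofReal p) :=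
    Real.HolderTriple.ennrealOfReal ⟨by field_simp; norm_num, by positivity, by positivity⟩
  exact hg.mul' hf

lemma MemLp.sq_of_two_mul (hp : 0 < p) (hf : MemLp f (ENNReal.ofReal (2 * p)) μ) :
    MemLp (fun ω => f ω ^ 2) (ENNReal.ofReal p) μ := by
  simpa only [sq] using hf.mul_of_two_mul hp hf

end Integrability

section Martingale

variable {ι κ : Type*} [Preorder ι] [Preorder κ] {𝒢 : Filtration ι m0}
  {X B : ι → Ω → ℝ} {Z : Ω → ℝ} {i j : ι}

def Filtration.comp (𝒢 : Filtration ι m0) {τ : κ → ι} (hτ : Monotone τ) : Filtration κ m0 :=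
  ⟨fun k => 𝒢 (τ k), fun _ _ h => 𝒢.mono (hτ h), fun _ => 𝒢.le _⟩

lemma Martingale.comp (hX : Martingale X 𝒢 μ) {τ : κ → ι} (hτ : Monotone τ) :
    Martingale (fun k => X (τ k)) (𝒢.comp hτ) μ :=
  ⟨fun k => hX.stronglyAdapted (τ k), fun _ _ h => hX.condExp_ae_eq (hτ h)⟩

variable [IsFiniteMeasure μ]

lemma Martingale.integral_mul_sub_eq_zero (hX : Martingale X 𝒢 μ) (hij : i ≤ j)
    (hZ : StronglyMeasurable[𝒢 i] Z) (hint : Integrable (fun ω => Z ω * (X j ω - X i ω)) μ) :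
    ∫ ω, Z ω * (X j ω - X i ω) ∂μ = 0 := by
  have hinc : μ[X j - X i|𝒢 i] =ᵐ[μ] 0 := by
    filter_upwards [condExp_sub (hX.integrable j) (hX.integrable i) (𝒢 i),
      hX.condExp_ae_eq hij] with ω h hj
    rw [h, Pi.sub_apply, hj, condExp_of_stronglyMeasurable (𝒢.le i) (hX.stronglyAdapted i)
      (hX.integrable i), sub_self, Pi.zero_apply]
  have hpull : μ[Z * (X j - X i)|𝒢 i] =ᵐ[μ] 0 := by
    filter_upwards [condExp_mul_of_stronglyMeasurable_left (g := X j - X i) hZ hint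
      ((hX.integrable j).sub (hX.integrable i)), hinc] with ω h h0
    rw [h, Pi.mul_apply, h0, Pi.zero_apply, mul_zero]
  calc ∫ ω, Z ω * (X j ω - X i ω) ∂μ = ∫ ω, μ[Z * (X j - X i)|𝒢 i] ω ∂μ :=
        (integral_condExp (𝒢.le i)).symm
    _ = 0 := by simp [integral_congr_ae hpull]

lemma Martingale.integral_mul_sq_sub_sub_eq_zero (hX : Martingale X 𝒢 μ)
    (hN : Martingale (fun i ω => X i ω ^ 2 - B i ω) 𝒢 μ) (hij : i ≤ j)
    (hZ : StronglyMeasurable[𝒢 i] Z)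
    (hZN : Integrable (fun ω => Z ω * ((X j ω ^ 2 - B j ω) - (X i ω ^ 2 - B i ω))) μ)
    (hZX : Integrable (fun ω => Z ω * (X i ω * (X j ω - X i ω))) μ) :
    ∫ ω, Z ω * ((X j ω - X i ω) ^ 2 - (B j ω - B i ω)) ∂μ = 0 := by
  replace hZX : Integrable (fun ω => Z ω * X i ω * (X j ω - X i ω)) μ := by
    simpa only [mul_assoc] using hZX
  have hZX' : ∫ ω, Z ω * X i ω * (X j ω - X i ω) ∂μ = 0 :=
    hX.integral_mul_sub_eq_zero hij (hZ.mul (hX.stronglyAdapted i)) hZX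
  calc ∫ ω, Z ω * ((X j ω - X i ω) ^ 2 - (B j ω - B i ω)) ∂μ
      = ∫ ω, (Z ω * ((X j ω ^ 2 - B j ω) - (X i ω ^ 2 - B i ω)) -
          2 * (Z ω * X i ω * (X j ω - X i ω))) ∂μ := by
        congr 1; ext ω; ring
    _ = 0 := by
        rw [integral_sub hZN (hZX.const_mul 2), integral_const_mul,
          hN.integral_mul_sub_eq_zero hij hZ hZN, hZX']
        simp

end Martingale

end MeasureTheory

section QuadraticSums

variable {Ω : Type*} {m0 : MeasurableSpace Ω} {μ : Measure Ω}

def quadSum (X : ℕ → Ω → ℝ) (n : ℕ) (ω : Ω) : ℝ :=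
  ∑ k ∈ range n, (X (k + 1) ω - X k ω) ^ 2

def quarticSum (X : ℕ → Ω → ℝ) (n : ℕ) (ω : Ω) : ℝ :=
  ∑ k ∈ range n, (X (k + 1) ω - X k ω) ^ 4

variable {X B : ℕ → Ω → ℝ} {n : ℕ} {p : ℝ}

lemma quadSum_nonneg (X : ℕ → Ω → ℝ) (n : ℕ) : 0 ≤ quadSum X n :=
  fun _ => sum_nonneg fun _ _ => sq_nonneg _

lemma quarticSum_nonneg (X : ℕ → Ω → ℝ) (n : ℕ) : 0 ≤ quarticSum X n :=
  fun _ => sum_nonneg fun _ _ => by positivity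

lemma quadSum_succ_sub (X : ℕ → Ω → ℝ) (k : ℕ) (ω : Ω) :
    quadSum X (k + 1) ω - quadSum X k ω = (X (k + 1) ω - X k ω) ^ 2 := by
  simp [quadSum, sum_range_succ]

lemma monotone_quadSum (X : ℕ → Ω → ℝ) (ω : Ω) : Monotone fun n => quadSum X n ω :=
  monotone_nat_of_le_succ fun k => by
    linarith [quadSum_succ_sub X k ω, sq_nonneg (X (k + 1) ω - X k ω)]

lemma sq_sub_le_sqrt_quarticSum {k : ℕ} (hk : k < n) (ω : Ω) :
    (X (k + 1) ω - X k ω) ^ 2 ≤ √(quarticSum X n ω) := by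
  rw [Real.le_sqrt (sq_nonneg _) (quarticSum_nonneg X n ω), quarticSum, ← pow_mul]
  exact single_le_sum (f := fun k => (X (k + 1) ω - X k ω) ^ 4) (fun _ _ => by positivity)
    (mem_range.2 hk)

lemma sqrt_quarticSum_le_quadSum (X : ℕ → Ω → ℝ) (n : ℕ) (ω : Ω) :
    √(quarticSum X n ω) ≤ quadSum X n ω := by
  rw [Real.sqrt_le_left (quadSum_nonneg X n ω)]
  simpa [quarticSum, quadSum, ← pow_mul] using
    sum_sq_le_sq_sum_of_nonneg (s := range n) (f := fun k => (X (k + 1) ω - X k ω) ^ 2)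
      fun _ _ => sq_nonneg _

lemma MeasureTheory.StronglyAdapted.stronglyMeasurable_quadSum {𝒢 : Filtration ℕ m0}
    (hX : StronglyAdapted 𝒢 X) (n : ℕ) : StronglyMeasurable[𝒢 n] (quadSum X n) :=
  Finset.stronglyMeasurable_fun_sum _ fun k hk =>
    (((hX (k + 1)).mono (𝒢.mono (mem_range.1 hk))).sub
      ((hX k).mono (𝒢.mono (mem_range.1 hk).le))).pow 2

lemma memLp_quadSum (hp : 0 < p) (hX : ∀ k, MemLp (X k) (ENNReal.ofReal (2 * p)) μ) (n : ℕ) :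
    MemLp (quadSum X n) (ENNReal.ofReal p) μ :=
  memLp_finsetSum (range n) fun k _ => by
    simpa only [Pi.sub_apply] using ((hX (k + 1)).sub (hX k)).sq_of_two_mul hp

end QuadraticSums

namespace MeasureTheory

variable {Ω : Type*} {m0 : MeasurableSpace Ω} {μ : Measure Ω} [IsFiniteMeasure μ]
  {𝒢 : Filtration ℕ m0} {X B : ℕ → Ω → ℝ} {δ : Ω → ℝ} {p : ℝ} {n : ℕ}

lemma Martingale.integral_sum_quadSum_rpow_mul_eq_zero (hp : 1 ≤ p) (hX : Martingale X 𝒢 μ)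
    (hN : Martingale (fun k ω => X k ω ^ 2 - B k ω) 𝒢 μ)
    (hXLp : ∀ k, MemLp (X k) (ENNReal.ofReal (2 * p)) μ)
    (hBLp : ∀ k, MemLp (B k) (ENNReal.ofReal p) μ) (n : ℕ) :
    ∫ ω, ∑ k ∈ range n, quadSum X k ω ^ (p - 1) *
      ((X (k + 1) ω - X k ω) ^ 2 - (B (k + 1) ω - B k ω)) ∂μ = 0 := by
  have hp0 : 0 < p := by linarith
  have hint : ∀ k {f : Ω → ℝ}, MemLp f (ENNReal.ofReal p) μ →
      Integrable (fun ω => quadSum X k ω ^ (p - 1) * f ω) μ :=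
    fun k _ hf => (memLp_quadSum hp0 hXLp k).integrable_rpow_sub_one_mul hp
      (quadSum_nonneg X k) hf
  have hZ : ∀ k, StronglyMeasurable[𝒢 k] fun ω => quadSum X k ω ^ (p - 1) := fun k =>
    (Real.continuous_rpow_const (by linarith)).comp_stronglyMeasurable
      (hX.stronglyAdapted.stronglyMeasurable_quadSum k)
  have hinc : ∀ k, MemLp (X (k + 1) - X k) (ENNReal.ofReal (2 * p)) μ :=
    fun k => (hXLp (k + 1)).sub (hXLp k)
  refine (integral_finsetSum _ fun k _ =>
    hint k (((hinc k).sq_of_two_mul hp0).sub ((hBLp _).sub (hBLp _)))).trans ?_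
  refine sum_eq_zero fun k _ => ?_
  exact hX.integral_mul_sq_sub_sub_eq_zero hN k.le_succ (hZ k)
    (hint k ((((hXLp _).sq_of_two_mul hp0).sub (hBLp _)).sub
      (((hXLp _).sq_of_two_mul hp0).sub (hBLp _))))
    (hint k ((hXLp k).mul_of_two_mul hp0 (hinc k)))

theorem Martingale.integral_quadSum_rpow_le_mul_integral (hp : 1 ≤ p) (hX : Martingale X 𝒢 μ)
    (hN : Martingale (fun k ω => X k ω ^ 2 - B k ω) 𝒢 μ) (hB : ∀ ω, Monotone (B · ω))
    (hXLp : ∀ k, MemLp (X k) (ENNReal.ofReal (2 * p)) μ)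
    (hBLp : ∀ k, MemLp (B k) (ENNReal.ofReal p) μ) (hδ : MemLp δ (ENNReal.ofReal p) μ)
    (hδ0 : 0 ≤ δ) (hinc : ∀ k < n, ∀ ω, (X (k + 1) ω - X k ω) ^ 2 ≤ δ ω) :
    ∫ ω, quadSum X n ω ^ p ∂μ ≤
      p * ∫ ω, quadSum X n ω ^ (p - 1) * (B n ω - B 0 ω + δ ω) ∂μ := by
  have hp0 : 0 < p := by linarith
  set S : Ω → ℝ := fun ω => ∑ k ∈ range n, quadSum X k ω ^ (p - 1) *
    ((X (k + 1) ω - X k ω) ^ 2 - (B (k + 1) ω - B k ω))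
  have pathwise : ∀ ω, quadSum X n ω ^ p ≤
      p * (S ω + quadSum X n ω ^ (p - 1) * (B n ω - B 0 ω + δ ω)) := by
    intro ω
    have garsia := rpow_le_sum_rpow_sub_one_mul_sub_add (g := fun k => quadSum X k ω) hp
      (by simp [quadSum]) (monotone_quadSum X ω) (hδ0 ω)
      fun k hk => (quadSum_succ_sub X k ω).trans_le (hinc k hk ω)
    simp only [quadSum_succ_sub] at garsia
    have hdrift : ∑ k ∈ range n, quadSum X k ω ^ (p - 1) * (B (k + 1) ω - B k ω) ≤
        quadSum X n ω ^ (p - 1) * (B n ω - B 0 ω) := by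
      rw [← sum_range_sub (B · ω), mul_sum]
      refine sum_le_sum fun k hk => mul_le_mul_of_nonneg_right ?_ (sub_nonneg.2 (hB ω k.le_succ))
      exact Real.rpow_le_rpow (quadSum_nonneg X k ω)
        (monotone_quadSum X ω (mem_range.1 hk).le) (by linarith)
    have hS_split : S ω = ∑ k ∈ range n, quadSum X k ω ^ (p - 1) * (X (k + 1) ω - X k ω) ^ 2 -
        ∑ k ∈ range n, quadSum X k ω ^ (p - 1) * (B (k + 1) ω - B k ω) := by
      simp only [S, mul_sub, sum_sub_distrib]
    nlinarith
  have hG := memLp_quadSum hp0 hXLp n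
  have hbδ : MemLp (fun ω => B n ω - B 0 ω + δ ω) (ENNReal.ofReal p) μ :=
    ((hBLp n).sub (hBLp 0)).add hδ
  have hint := hG.integrable_rpow_sub_one_mul hp (quadSum_nonneg X n) hbδ
  have hS_int : Integrable S μ := integrable_finsetSum _ fun k _ =>
    (memLp_quadSum hp0 hXLp k).integrable_rpow_sub_one_mul hp (quadSum_nonneg X k)
      ((((hXLp _).sub (hXLp _)).sq_of_two_mul hp0).sub ((hBLp _).sub (hBLp _)))
  calc ∫ ω, quadSum X n ω ^ p ∂μ
      ≤ ∫ ω, p * (S ω + quadSum X n ω ^ (p - 1) * (B n ω - B 0 ω + δ ω)) ∂μ :=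
        integral_mono (hG.integrable_rpow hp0 (quadSum_nonneg X n))
          (hS_int.add hint |>.const_mul p) pathwise
    _ = p * ∫ ω, quadSum X n ω ^ (p - 1) * (B n ω - B 0 ω + δ ω) ∂μ := by
        rw [integral_const_mul, integral_add hS_int hint,
          hX.integral_sum_quadSum_rpow_mul_eq_zero hp hN hXLp hBLp n, zero_add]

theorem Martingale.integral_quadSum_rpow_le (hp : 1 ≤ p) (hX : Martingale X 𝒢 μ)
    (hN : Martingale (fun k ω => X k ω ^ 2 - B k ω) 𝒢 μ) (hB : ∀ ω, Monotone (B · ω))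
    (hXLp : ∀ k, MemLp (X k) (ENNReal.ofReal (2 * p)) μ)
    (hBLp : ∀ k, MemLp (B k) (ENNReal.ofReal p) μ) (hδ : MemLp δ (ENNReal.ofReal p) μ)
    (hδ0 : 0 ≤ δ) (hinc : ∀ k < n, ∀ ω, (X (k + 1) ω - X k ω) ^ 2 ≤ δ ω) :
    ∫ ω, quadSum X n ω ^ p ∂μ ≤ (2 * p) ^ p * ∫ ω, (B n ω - B 0 ω + δ ω) ^ p ∂μ := by
  have hp0 : 0 < p := by linarith
  set c : Ω → ℝ := fun ω => B n ω - B 0 ω + δ ω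
  have hc0 : 0 ≤ c := fun ω => by
    have := hB ω n.zero_le; have := hδ0 ω; simp only [c]; linarith
  have hG := memLp_quadSum hp0 hXLp n
  have hc : MemLp c (ENNReal.ofReal p) μ := ((hBLp n).sub (hBLp 0)).add hδ
  -- `2 p c G^{p-1} ≤ (2 p c)^p + G^p` lets half of `∫ G^p` be absorbed into the left-hand side
  have absorb : ∀ ω, p * (quadSum X n ω ^ (p - 1) * c ω) ≤
      ((2 * p) ^ p * c ω ^ p + quadSum X n ω ^ p) / 2 := fun ω => by
    have := Real.mul_rpow_sub_one_le_rpow_add_rpow (x := 2 * p * c ω)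
      (mul_nonneg (by linarith) (hc0 ω)) (quadSum_nonneg X n ω) hp
    rw [Real.mul_rpow (by linarith) (hc0 ω)] at this
    linarith
  have hGp := hG.integrable_rpow hp0 (quadSum_nonneg X n)
  have hcp := hc.integrable_rpow hp0 hc0
  have := calc ∫ ω, quadSum X n ω ^ p ∂μ
      ≤ p * ∫ ω, quadSum X n ω ^ (p - 1) * c ω ∂μ :=
        hX.integral_quadSum_rpow_le_mul_integral hp hN hB hXLp hBLp hδ hδ0 hinc
    _ = ∫ ω, p * (quadSum X n ω ^ (p - 1) * c ω) ∂μ := (integral_const_mul _ _).symm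
    _ ≤ ∫ ω, ((2 * p) ^ p * c ω ^ p + quadSum X n ω ^ p) / 2 ∂μ :=
        integral_mono ((hG.integrable_rpow_sub_one_mul hp (quadSum_nonneg X n) hc).const_mul p)
          (((hcp.const_mul _).add hGp).div_const 2) absorb
    _ = ((2 * p) ^ p * ∫ ω, c ω ^ p ∂μ + ∫ ω, quadSum X n ω ^ p ∂μ) / 2 := by
        rw [integral_div, integral_add (hcp.const_mul _) hGp, integral_const_mul]
  linarith

theorem Martingale.lintegral_abs_quadSum_sub_rpow_le (hp : 1 ≤ p) (hX : Martingale X 𝒢 μ)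
    (hN : Martingale (fun k ω => X k ω ^ 2 - B k ω) 𝒢 μ) (hB : ∀ ω, Monotone (B · ω))
    (hXLp : ∀ k, MemLp (X k) (ENNReal.ofReal (2 * p)) μ)
    (hBLp : ∀ k, MemLp (B k) (ENNReal.ofReal p) μ) (n : ℕ) :
    ∫⁻ ω, ENNReal.ofReal (|quadSum X n ω - (B n ω - B 0 ω)| ^ p) ∂μ ≤
      ENNReal.ofReal ((4 * p) ^ p + 1) *
        (∫⁻ ω, ENNReal.ofReal ((B n ω - B 0 ω) ^ p) ∂μ +
          ∫⁻ ω, ENNReal.ofReal (quarticSum X n ω ^ (p / 2)) ∂μ) := by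
  have hp0 : 0 < p := by linarith
  set b : Ω → ℝ := fun ω => B n ω - B 0 ω
  set δ : Ω → ℝ := fun ω => √(quarticSum X n ω)
  have hb0 : 0 ≤ b := fun ω => sub_nonneg.2 (hB ω n.zero_le)
  have hδ0 : 0 ≤ δ := fun ω => Real.sqrt_nonneg _
  have hG := memLp_quadSum hp0 hXLp n
  have hb : MemLp b (ENNReal.ofReal p) μ := (hBLp n).sub (hBLp 0)
  have hδ : MemLp δ (ENNReal.ofReal p) μ := by
    refine hG.of_le (Real.continuous_sqrt.comp_aestronglyMeasurable
      (Finset.aestronglyMeasurable_fun_sum _ fun k _ =>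
        ((hXLp (k + 1)).1.sub (hXLp k).1).pow 4)) (Eventually.of_forall fun ω => ?_)
    rw [Real.norm_of_nonneg (hδ0 ω), Real.norm_of_nonneg (quadSum_nonneg X n ω)]
    exact sqrt_quarticSum_le_quadSum X n ω
  have hδp : ∀ ω, δ ω ^ p = quarticSum X n ω ^ (p / 2) := fun ω => by
    simp only [δ]
    rw [Real.sqrt_eq_rpow, ← Real.rpow_mul (quarticSum_nonneg X n ω)]
    ring_nf
  have hbp := hb.integrable_rpow hp0 hb0
  have hδp' := hδ.integrable_rpow hp0 hδ0
  have hGp := hG.integrable_rpow hp0 (quadSum_nonneg X n)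
  have hbδ : Integrable (fun ω => b ω ^ p + δ ω ^ p) μ := hbp.add hδp'
  have hreal : ∫ ω, |quadSum X n ω - b ω| ^ p ∂μ ≤
      ((4 * p) ^ p + 1) * ∫ ω, (b ω ^ p + δ ω ^ p) ∂μ := by
    have hquad := hX.integral_quadSum_rpow_le hp hN hB hXLp hBLp hδ hδ0
      fun k hk ω => sq_sub_le_sqrt_quarticSum hk ω
    have hsplit : ∫ ω, (b ω + δ ω) ^ p ∂μ ≤ 2 ^ p * ∫ ω, (b ω ^ p + δ ω ^ p) ∂μ := by
      rw [← integral_const_mul]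
      exact integral_mono ((hb.add hδ).integrable_rpow hp0 (add_nonneg hb0 hδ0))
        (hbδ.const_mul _) fun ω => Real.add_rpow_le_two_rpow_mul (hb0 ω) (hδ0 ω) hp0.le
    have hmono : ∫ ω, b ω ^ p ∂μ ≤ ∫ ω, (b ω ^ p + δ ω ^ p) ∂μ :=
      integral_mono hbp hbδ fun ω => le_add_of_nonneg_right (Real.rpow_nonneg (hδ0 ω) p)
    calc ∫ ω, |quadSum X n ω - b ω| ^ p ∂μ
        ≤ ∫ ω, (quadSum X n ω ^ p + b ω ^ p) ∂μ :=
          integral_mono ((hG.sub hb).integrable_abs_rpow hp0) (hGp.add hbp) fun ω =>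
            Real.abs_sub_rpow_le_rpow_add_rpow (quadSum_nonneg X n ω) (hb0 ω) hp0.le
      _ = ∫ ω, quadSum X n ω ^ p ∂μ + ∫ ω, b ω ^ p ∂μ := integral_add hGp hbp
      _ ≤ (2 * p) ^ p * (2 ^ p * ∫ ω, (b ω ^ p + δ ω ^ p) ∂μ) +
            ∫ ω, (b ω ^ p + δ ω ^ p) ∂μ := by
          gcongr
          exact hquad.trans (mul_le_mul_of_nonneg_left hsplit (by positivity))
      _ = ((4 * p) ^ p + 1) * ∫ ω, (b ω ^ p + δ ω ^ p) ∂μ := by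
          rw [show (4 * p) = 2 * p * 2 by ring, Real.mul_rpow (by positivity) zero_le_two]
          ring
  calc ∫⁻ ω, ENNReal.ofReal (|quadSum X n ω - b ω| ^ p) ∂μ
      = ENNReal.ofReal (∫ ω, |quadSum X n ω - b ω| ^ p ∂μ) :=
        (ofReal_integral_eq_lintegral_ofReal ((hG.sub hb).integrable_abs_rpow hp0)
          (Eventually.of_forall fun ω => by positivity)).symm
    _ ≤ ENNReal.ofReal (((4 * p) ^ p + 1) * ∫ ω, (b ω ^ p + δ ω ^ p) ∂μ) :=
        ENNReal.ofReal_le_ofReal hreal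
    _ = ENNReal.ofReal ((4 * p) ^ p + 1) *
          ∫⁻ ω, (ENNReal.ofReal (b ω ^ p) + ENNReal.ofReal (δ ω ^ p)) ∂μ := by
        rw [ENNReal.ofReal_mul (by positivity), ofReal_integral_eq_lintegral_ofReal hbδ
          (Eventually.of_forall fun ω =>
            add_nonneg (Real.rpow_nonneg (hb0 ω) p) (Real.rpow_nonneg (hδ0 ω) p))]
        simp only [ENNReal.ofReal_add (Real.rpow_nonneg (hb0 _) p) (Real.rpow_nonneg (hδ0 _) p)]
    _ = _ := by
        rw [lintegral_add_left' hbp.aemeasurable.ennreal_ofReal]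
        simp only [hδp, b]

end MeasureTheory

section PVariation

lemma RPPartition.left_le_right {a b : ℝ} (D : RPPartition a b) : a ≤ b := by
  simpa [D.first, D.last D.n le_rfl] using D.mono D.n.zero_le

lemma RPPartition.mem_Icc {a b : ℝ} (D : RPPartition a b) (k : ℕ) : D.t k ∈ Icc a b := by
  have ha := D.mono k.zero_le
  have hb := D.mono (le_max_left k D.n)
  rw [D.first] at ha
  rw [D.last _ (le_max_right k D.n)] at hb
  exact ⟨ha, hb⟩

def RPPartition.endpoints {a b : ℝ} (hab : a ≤ b) : RPPartition a b where
  n := 1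
  t k := if k = 0 then a else b
  mono i j hij := by
    dsimp only
    split_ifs <;> first | exact le_rfl | exact hab | omega
  first := if_pos rfl
  last k hk := if_neg (by omega)

variable {E : Type*} [NormedAddCommGroup E] {a b : ℝ}

lemma ofReal_sum_le_pVar (p : ℝ) (f : ℝ → E) (D : RPPartition a b) :
    ENNReal.ofReal (∑ k ∈ range D.n, ‖f (D.t (k + 1)) - f (D.t k)‖ ^ p) ≤ pVar p f a b :=
  le_iSup (fun D : RPPartition a b =>
    ENNReal.ofReal (∑ k ∈ range D.n, ‖f (D.t (k + 1)) - f (D.t k)‖ ^ p)) D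

lemma ofReal_sub_le_pVar_one (f : ℝ → ℝ) (hab : a ≤ b) :
    ENNReal.ofReal (f b - f a) ≤ pVar 1 f a b :=
  (ENNReal.ofReal_le_ofReal (le_abs_self _)).trans <| by
    simpa [RPPartition.endpoints] using ofReal_sum_le_pVar 1 f (RPPartition.endpoints hab)

lemma ofReal_quarticSum_le_pVar {Ω : Type*} (M : ℝ → Ω → ℝ) (D : RPPartition a b) (ω : Ω) :
    ENNReal.ofReal (quarticSum (fun k => M (D.t k)) D.n ω) ≤ pVar 4 (fun t => M t ω) a b := by
  convert ofReal_sum_le_pVar 4 (fun t => M t ω) D using 2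
  simp only [quarticSum, Real.norm_eq_abs, Real.rpow_ofNat, (show Even 4 by decide).pow_abs]

end PVariation

namespace MeasureTheory

variable {Ω : Type*} {m0 : MeasurableSpace Ω} {μ : Measure Ω} {p : ℝ}

lemma memLp_of_ofReal_le_of_lintegral_rpow_ne_top (hp : 0 < p) {f : Ω → ℝ} {g : Ω → ℝ≥0∞}
    (hf : AEStronglyMeasurable f μ) (hf0 : 0 ≤ f) (hfg : ∀ ω, ENNReal.ofReal (f ω) ≤ g ω)
    (hg : ∫⁻ ω, g ω ^ p ∂μ ≠ ⊤) : MemLp f (ENNReal.ofReal p) μ := by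
  refine ⟨hf, (eLpNorm_lt_top_iff_lintegral_rpow_enorm_lt_top (by simpa using hp)
    ENNReal.ofReal_ne_top).2 (lt_of_le_of_lt (lintegral_mono fun ω => ?_) hg.lt_top)⟩
  rw [Real.enorm_eq_ofReal (hf0 ω), ENNReal.toReal_ofReal hp.le]
  exact ENNReal.rpow_le_rpow (hfg ω) hp.le

lemma memLp_of_lintegral_pVar_one_ne_top (hp : 0 < p) {A : ℝ → Ω → ℝ} {T t : ℝ}
    (hA : AEStronglyMeasurable (A t) μ) (hA0 : ∀ ω, A 0 ω = 0)
    (hAmono : ∀ ω, MonotoneOn (A · ω) (Icc 0 T))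
    (hfin : ∫⁻ ω, pVar 1 (A · ω) 0 T ^ p ∂μ ≠ ⊤) (ht : t ∈ Icc 0 T) :
    MemLp (A t) (ENNReal.ofReal p) μ := by
  have hT : (0 : ℝ) ≤ T := ht.1.trans ht.2
  refine memLp_of_ofReal_le_of_lintegral_rpow_ne_top hp hA
    (fun ω => by simpa [hA0] using hAmono ω (left_mem_Icc.2 hT) ht ht.1) (fun ω => ?_) hfin
  calc ENNReal.ofReal (A t ω) ≤ ENNReal.ofReal (A T ω - A 0 ω) := by
        rw [hA0, sub_zero]
        exact ENNReal.ofReal_le_ofReal (hAmono ω ht (right_mem_Icc.2 hT) ht.2)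
    _ ≤ pVar 1 (A · ω) 0 T := ofReal_sub_le_pVar_one (A · ω) hT

lemma Martingale.stronglyAdapted_of_sq_sub {ι : Type*} [Preorder ι] {𝒢 : Filtration ι m0}
    {M A : ι → Ω → ℝ} (hM : Martingale M 𝒢 μ)
    (hN : Martingale (fun t ω => M t ω ^ 2 - A t ω) 𝒢 μ) : StronglyAdapted 𝒢 A := fun t => by
  convert ((hM.stronglyAdapted t).pow 2).sub (hN.stronglyAdapted t) using 1
  ext ω; simp

end MeasureTheory

theorem statement14 (q : ℝ) (hq : 2 ≤ q) :
    ∃ C : ℝ≥0∞, 0 < C ∧ C < ⊤ ∧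
      ∀ {Ω : Type} [MeasurableSpace Ω] (μ : Measure Ω) [IsProbabilityMeasure μ],
        ∀ (F : Filtration ℝ ‹MeasurableSpace Ω›) (T : ℝ) (M : ℝ → Ω → ℝ),
          (∀ ω, Continuous fun t => M t ω) → Martingale M F μ →
          (∀ t, MemLp (M t) (ENNReal.ofReal q) μ) →
          ∀ A : ℝ → Ω → ℝ, (∀ ω, Continuous fun t => A t ω) → (∀ ω, A 0 ω = 0) →
            (∀ ω, MonotoneOn (fun t => A t ω) (Set.Icc 0 T)) →
            Martingale (fun t ω => M t ω ^ 2 - A t ω) F μ →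
            ∀ D : RPPartition 0 T,
              (∫⁻ ω, ENNReal.ofReal
                  (|(∑ k ∈ Finset.range D.n, (M (D.t (k + 1)) ω - M (D.t k) ω) ^ 2) -
                      A T ω| ^ (q / 2)) ∂μ) ≤
                C * ((∫⁻ ω, pVar 4 (fun t => M t ω) 0 T ^ (q / 4) ∂μ) +
                  ∫⁻ ω, pVar 1 (fun t => A t ω) 0 T ^ (q / 2) ∂μ) := by
  have hp : 1 ≤ q / 2 := by linarith
  refine ⟨ENNReal.ofReal ((4 * (q / 2)) ^ (q / 2) + 1), by simp; positivity,
    ENNReal.ofReal_lt_top, ?_⟩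
  intro Ω _ μ _ F T M _ hM hMLp A _ hA0 hAmono hN D
  by_cases hAfin : ∫⁻ ω, pVar 1 (fun t => A t ω) 0 T ^ (q / 2) ∂μ = ⊤
  · rw [hAfin, add_top, ENNReal.mul_top (by simp; positivity)]
    exact le_top
  have hT := D.left_le_right
  have hA : ∀ t, AEStronglyMeasurable (A t) μ := fun t =>
    ((hM.stronglyAdapted_of_sq_sub hN t).mono (F.le t)).aestronglyMeasurable
  have key := (hM.comp D.mono).lintegral_abs_quadSum_sub_rpow_le (B := fun k => A (D.t k)) hp
    (hN.comp D.mono) (fun ω _ _ h => hAmono ω (D.mem_Icc _) (D.mem_Icc _) (D.mono h))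
    (fun k => by rw [mul_div_cancel₀ q two_ne_zero]; exact hMLp _)
    (fun k => memLp_of_lintegral_pVar_one_ne_top (by linarith) (hA _) hA0 hAmono hAfin
      (D.mem_Icc k)) D.n
  simp only [D.first, D.last D.n le_rfl, hA0, sub_zero] at key
  refine key.trans (mul_le_mul_right ?_ _)
  rw [add_comm]
  gcongr with ω ω
  · rw [← ENNReal.ofReal_rpow_of_nonneg (quarticSum_nonneg _ _ ω) (by positivity),
      show q / 2 / 2 = q / 4 by ring]
    gcongr
    exact ofReal_quarticSum_le_pVar M D ω
  · have hAT : 0 ≤ A T ω := by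
      simpa [hA0] using hAmono ω (left_mem_Icc.2 hT) (right_mem_Icc.2 hT) hT
    rw [← ENNReal.ofReal_rpow_of_nonneg hAT (by positivity)]
    gcongr
    simpa [hA0] using ofReal_sub_le_pVar_one (A · ω) hT
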